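/- Single-spin marginal for the general q-state Potts model: for x ∈ V and m ∈ {1,…,q}, π_{qβ,ĥ,q,V}(σ̂_x = m) = φ_{p,ĥ,q,G}( exp(β Σ_{i∈K_t} h_{i,m}) / Σ_{p=1}^q exp(β Σ_{i∈K_t} h_{i,p}) ), where K_t is the connected component of x under the general random-cluster measure. -/

import Mathlib

/-!
Fortuin–Kasteleyn expansion. Since `δ ∈ {0, 1}`, each edge factor of the Potts weight is
`e^{qβJ_e δ_e} = e^{qβJ_e} (p_e δ_e + 1 - p_e)`; expanding the product over the edges writes the
weight of `τ` as a sum over open-edge sets `F` of `B(F) · ∏_{e ∈ F} δ_e(τ) · e^{β Σ_i h_{i,τ_i}}`.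
The deltas leave only colourings constant on the clusters of `F`, so the sum over `τ` factorises
over clusters, a cluster `K` contributing `Σ_r e^{β Σ_{i ∈ K} h_{i,r}}`. Prescribing `τ_x = m`
replaces the factor of the cluster of `x` by its `m`-th term, i.e. multiplies the weight of `F` by
the ratio in the statement.
-/

open Finset

noncomputable section

variable {V : Type}

/-- The spin value (±1) attached to a Boolean spin (`true ↔ +1`, `false ↔ -1`). -/
def spin (b : Bool) : ℝ := if b then 1 else -1

/-- The subgraph of `G` whose open edges are the edges in `F`. -/
def openSub (G : SimpleGraph V) (F : Finset (Sym2 V)) : SimpleGraph V where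
  Adj i j := G.Adj i j ∧ s(i, j) ∈ F
  symm := by
    constructor
    intro i j h
    exact ⟨h.1.symm, by rw [Sym2.eq_swap]; exact h.2⟩
  loopless := ⟨fun i h => G.loopless.1 i h.1⟩

instance [Fintype V] (H : SimpleGraph V) : Fintype H.ConnectedComponent := by
  classical exact Fintype.ofSurjective H.connectedComponentMk Quot.exists_rep

/-- The vertex set of a connected component, as a `Finset`. -/
def compSupp [Fintype V] (H : SimpleGraph V) (c : H.ConnectedComponent) : Finset V := by
  classical exact Finset.univ.filter fun v => H.connectedComponentMk v = c

/-- Kronecker delta `δ_{σ_i,σ_j}` of a configuration on an (unordered) edge. -/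
def eDelta {S : Type} [DecidableEq S] (σ : V → S) : Sym2 V → ℝ :=
  Sym2.lift ⟨fun i j => if σ i = σ j then 1 else 0, fun _ _ => by simp [eq_comm]⟩

/-- Product of spins `σ_i σ_j` on an (unordered) edge. -/
def eProd (σ : V → Bool) : Sym2 V → ℝ :=
  Sym2.lift ⟨fun i j => spin (σ i) * spin (σ j), fun _ _ => mul_comm _ _⟩

/-- The consistency indicator `Δ(σ,ω)`: equal to `1` iff `σ` is constant on
every open edge of the configuration `F`. -/
def Delta (G : SimpleGraph V) (F : Finset (Sym2 V)) (σ : V → Bool) : ℝ := by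
  classical exact if ∀ i j, G.Adj i j → s(i, j) ∈ F → σ i = σ j then 1 else 0

/-- The Bernoulli factor `B_J(ω) = ∏_{e open} p_e ∏_{e closed} (1-p_e)`. -/
def bern [Fintype V] [DecidableEq V] (G : SimpleGraph V) [DecidableRel G.Adj]
    (p : Sym2 V → ℝ) (F : Finset (Sym2 V)) : ℝ :=
  (∏ e ∈ F, p e) * ∏ e ∈ G.edgeFinset \ F, (1 - p e)

/-- The (unnormalized) `q`-state Potts Boltzmann weight at inverse temperature
`qβ`, with fields `ĥ = (h i r)`. -/
def pottsWq [Fintype V] [DecidableEq V] (G : SimpleGraph V) [DecidableRel G.Adj]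
    (q : ℕ) (β : ℝ) (J : Sym2 V → ℝ) (hh : V → Fin q → ℝ) (τ : V → Fin q) : ℝ :=
  Real.exp (-(q * β) *
    (-(∑ e ∈ G.edgeFinset, J e * eDelta τ e)
      - ∑ r : Fin q, ∑ i, hh i r / q * (if τ i = r then 1 else 0)))

/-- The general random-cluster weight
`B_{J,q}(ω) ∏_α Σ_{p=1}^q exp(β Σ_{i∈K_α} h_{i,p})`. -/
def grcW [Fintype V] [DecidableEq V] (G : SimpleGraph V) [DecidableRel G.Adj]
    (q : ℕ) (β : ℝ) (p : Sym2 V → ℝ) (hh : V → Fin q → ℝ) (F : Finset (Sym2 V)) : ℝ :=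
  bern G p F * ∏ c : (openSub G F).ConnectedComponent,
    ∑ r : Fin q, Real.exp (β * ∑ i ∈ compSupp (openSub G F) c, hh i r)

/-- Expectation of `f` under the general random-cluster measure. -/
def grcE [Fintype V] [DecidableEq V] (G : SimpleGraph V) [DecidableRel G.Adj]
    (q : ℕ) (β : ℝ) (p : Sym2 V → ℝ) (hh : V → Fin q → ℝ)
    (f : Finset (Sym2 V) → ℝ) : ℝ :=
  (∑ F ∈ G.edgeFinset.powerset, f F * grcW G q β p hh F) /
    ∑ F ∈ G.edgeFinset.powerset, grcW G q β p hh F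

/-- The component of `z` in the configuration `F`, as a `Finset`. -/
def Kcomp [Fintype V] [DecidableEq V] (G : SimpleGraph V) (F : Finset (Sym2 V))
    (z : V) : Finset V :=
  compSupp (openSub G F) ((openSub G F).connectedComponentMk z)

theorem sum_filter_apply_eq_prod {R ι κ : Type*} [CommSemiring R] [Fintype ι] [DecidableEq ι]
    [Fintype κ] [DecidableEq κ] (f : ι → κ → R) (c₀ : ι) (m : κ) :
    ∑ ℓ ∈ univ.filter (fun ℓ : ι → κ => ℓ c₀ = m), ∏ c, f c (ℓ c)
      = f c₀ m * ∏ c ∈ univ.erase c₀, ∑ r, f c r := by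
  set t : ι → Finset κ := fun c => if c = c₀ then {m} else univ
  have ht : Fintype.piFinset t = univ.filter (fun ℓ : ι → κ => ℓ c₀ = m) := by
    ext ℓ
    simp only [Fintype.mem_piFinset, mem_filter, mem_univ, true_and, t]
    refine ⟨fun h => by simpa using h c₀, fun h c => ?_⟩
    split_ifs with hc <;> simp [hc, h]
  rw [← ht, ← prod_univ_sum, ← mul_prod_erase univ _ (mem_univ c₀)]
  congr 1
  · simp [t]
  · exact prod_congr rfl fun c hc => by simp [t, ne_of_mem_erase hc]

theorem Real.exp_mul_eq_of_eq_zero_or_eq_one {δ : ℝ} (hδ : δ = 0 ∨ δ = 1) (a : ℝ) :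
    Real.exp (a * δ) = Real.exp a * ((1 - Real.exp (-a)) * δ + Real.exp (-a)) := by
  rcases hδ with rfl | rfl
  · simp [← Real.exp_add]
  · simp

theorem Real.sum_exp_pos {ι : Type*} [Fintype ι] [Nonempty ι] (f : ι → ℝ) :
    0 < ∑ i, Real.exp (f i) :=
  sum_pos (fun i _ => Real.exp_pos (f i)) univ_nonempty

theorem mem_compSupp [Fintype V] {H : SimpleGraph V} {c : H.ConnectedComponent} {v : V} :
    v ∈ compSupp H c ↔ H.connectedComponentMk v = c := by
  classical
  simp [compSupp]

theorem sum_eq_sum_compSupp [Fintype V] {M : Type*} [AddCommMonoid M] (H : SimpleGraph V)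
    (g : V → M) :
    ∑ i, g i = ∑ c, ∑ i ∈ compSupp H c, g i := by
  classical
  rw [← sum_fiberwise univ H.connectedComponentMk g]
  exact sum_congr rfl fun c _ => sum_congr (ext fun v => by simp [mem_compSupp]) fun _ _ => rfl

theorem SimpleGraph.Reachable.apply_eq_of_adj {H : SimpleGraph V} {S : Type*} {τ : V → S}
    (hτ : ∀ ⦃i j⦄, H.Adj i j → τ i = τ j) {i j : V} (h : H.Reachable i j) : τ i = τ j := by
  obtain ⟨w⟩ := h
  induction w with
  | nil => rfl
  | cons hadj _ ih => exact (hτ hadj).trans ih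

theorem mem_range_comp_connectedComponentMk_iff [Fintype V] [DecidableEq V] {G : SimpleGraph V}
    [DecidableRel G.Adj] {F : Finset (Sym2 V)} (hF : F ⊆ G.edgeFinset) {S : Type} (τ : V → S) :
    τ ∈ Set.range (· ∘ (openSub G F).connectedComponentMk)
      ↔ ∀ ⦃i j⦄, s(i, j) ∈ F → τ i = τ j := by
  constructor
  · rintro ⟨ℓ, rfl⟩ i j hij
    exact congrArg ℓ (SimpleGraph.ConnectedComponent.connectedComponentMk_eq_of_adj
      ⟨SimpleGraph.mem_edgeFinset.mp (hF hij), hij⟩)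
  · intro hτ
    refine ⟨fun c => τ c.out, funext fun v => ?_⟩
    exact SimpleGraph.Reachable.apply_eq_of_adj
      (fun i j (hij : (openSub G F).Adj i j) => hτ hij.2)
      (SimpleGraph.ConnectedComponent.exact (Quot.out_eq _))

open scoped Classical in
theorem prod_eDelta {S : Type} [DecidableEq S] (F : Finset (Sym2 V)) (τ : V → S) :
    ∏ e ∈ F, eDelta τ e = if ∀ ⦃i j⦄, s(i, j) ∈ F → τ i = τ j then 1 else 0 := by
  split_ifs with h
  · exact prod_eq_one fun e he => by
      induction e using Sym2.ind with
      | _ i j => simpa [eDelta] using h he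
  · push Not at h
    obtain ⟨i, j, hij, hne⟩ := h
    exact prod_eq_zero hij (by simp [eDelta, hne])

theorem eDelta_eq_zero_or_eq_one {S : Type} [DecidableEq S] (τ : V → S) (e : Sym2 V) :
    eDelta τ e = 0 ∨ eDelta τ e = 1 := by
  induction e using Sym2.ind with
  | _ i j => by_cases h : τ i = τ j <;> simp [eDelta, h]

open scoped Classical in
theorem sum_prod_eDelta_mul [Fintype V] [DecidableEq V] {G : SimpleGraph V} [DecidableRel G.Adj]
    {F : Finset (Sym2 V)} (hF : F ⊆ G.edgeFinset) {S : Type} [Fintype S] [DecidableEq S]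
    (u : (V → S) → ℝ) :
    ∑ τ : V → S, (∏ e ∈ F, eDelta τ e) * u τ
      = ∑ ℓ : (openSub G F).ConnectedComponent → S, u (ℓ ∘ (openSub G F).connectedComponentMk) := by
  have hinj : Function.Injective (· ∘ (openSub G F).connectedComponentMk : _ → V → S) :=
    Quot.mk_surjective.injective_comp_right
  have himage : univ.filter (fun τ : V → S => ∀ ⦃i j⦄, s(i, j) ∈ F → τ i = τ j)
      = univ.image (· ∘ (openSub G F).connectedComponentMk) := by
    ext τ
    simp [← mem_range_comp_connectedComponentMk_iff hF]
  simp_rw [prod_eDelta, ite_mul, one_mul, zero_mul]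
  rw [← sum_filter, himage, sum_image fun _ _ _ _ h => hinj h]

theorem exp_mul_sum_comp_eq_prod [Fintype V] (H : SimpleGraph V) {S : Type} (β : ℝ)
    (hh : V → S → ℝ) (ℓ : H.ConnectedComponent → S) :
    Real.exp (β * ∑ i, hh i (ℓ (H.connectedComponentMk i)))
      = ∏ c, Real.exp (β * ∑ i ∈ compSupp H c, hh i (ℓ c)) := by
  rw [sum_eq_sum_compSupp H, mul_sum, Real.exp_sum]
  refine prod_congr rfl fun c _ => congrArg (fun t => Real.exp (β * t)) ?_
  exact sum_congr rfl fun i hi => by rw [mem_compSupp.mp hi]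

open scoped Classical in
theorem sum_filter_prod_eDelta_mul_exp [Fintype V] [DecidableEq V] {G : SimpleGraph V}
    [DecidableRel G.Adj] {F : Finset (Sym2 V)} (hF : F ⊆ G.edgeFinset) {q : ℕ} (β : ℝ)
    (hh : V → Fin q → ℝ) (x : V) (m : Fin q) :
    ∑ τ ∈ univ.filter (fun τ : V → Fin q => τ x = m),
        (∏ e ∈ F, eDelta τ e) * Real.exp (β * ∑ i, hh i (τ i))
      = Real.exp (β * ∑ i ∈ Kcomp G F x, hh i m) *
        ∏ c ∈ univ.erase ((openSub G F).connectedComponentMk x),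
          ∑ r, Real.exp (β * ∑ i ∈ compSupp (openSub G F) c, hh i r) := by
  calc _ = ∑ τ : V → Fin q, (∏ e ∈ F, eDelta τ e) *
        if τ x = m then Real.exp (β * ∑ i, hh i (τ i)) else 0 := by
        simp_rw [sum_filter, mul_ite, mul_zero]
    _ = ∑ ℓ ∈ univ.filter
          (fun ℓ : (openSub G F).ConnectedComponent → Fin q =>
            ℓ ((openSub G F).connectedComponentMk x) = m),
          ∏ c, Real.exp (β * ∑ i ∈ compSupp (openSub G F) c, hh i (ℓ c)) := by
        rw [sum_prod_eDelta_mul hF, sum_filter]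
        simp_rw [Function.comp_apply, exp_mul_sum_comp_eq_prod]
    _ = _ := sum_filter_apply_eq_prod
          (fun c r => Real.exp (β * ∑ i ∈ compSupp (openSub G F) c, hh i r)) _ m

open scoped Classical in
theorem sum_filter_prod_eDelta_mul_exp_eq_div_mul [Fintype V] [DecidableEq V]
    {G : SimpleGraph V} [DecidableRel G.Adj] {F : Finset (Sym2 V)} (hF : F ⊆ G.edgeFinset)
    {q : ℕ} (hq : 0 < q) (β : ℝ) (hh : V → Fin q → ℝ) (x : V) (m : Fin q) :
    ∑ τ ∈ univ.filter (fun τ : V → Fin q => τ x = m),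
        (∏ e ∈ F, eDelta τ e) * Real.exp (β * ∑ i, hh i (τ i))
      = Real.exp (β * ∑ i ∈ Kcomp G F x, hh i m) /
          (∑ r : Fin q, Real.exp (β * ∑ i ∈ Kcomp G F x, hh i r)) *
        ∏ c, ∑ r, Real.exp (β * ∑ i ∈ compSupp (openSub G F) c, hh i r) := by
  have : Nonempty (Fin q) := ⟨⟨0, hq⟩⟩
  have hZ := Real.sum_exp_pos fun r : Fin q => β * ∑ i ∈ Kcomp G F x, hh i r
  rw [sum_filter_prod_eDelta_mul_exp hF, ← mul_prod_erase univ _ (mem_univ _)]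
  unfold Kcomp at hZ ⊢
  field_simp

theorem prod_exp_mul_eDelta_eq_sum_bern [Fintype V] [DecidableEq V] (G : SimpleGraph V)
    [DecidableRel G.Adj] {S : Type} [DecidableEq S] (a p : Sym2 V → ℝ)
    (hp : ∀ e, p e = 1 - Real.exp (-a e)) (τ : V → S) :
    ∏ e ∈ G.edgeFinset, Real.exp (a e * eDelta τ e)
      = Real.exp (∑ e ∈ G.edgeFinset, a e) *
        ∑ F ∈ G.edgeFinset.powerset, bern G p F * ∏ e ∈ F, eDelta τ e := by
  have hedge : ∀ e, Real.exp (a e * eDelta τ e)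
      = Real.exp (a e) * (p e * eDelta τ e + (1 - p e)) := fun e => by
    rw [Real.exp_mul_eq_of_eq_zero_or_eq_one (eDelta_eq_zero_or_eq_one τ e), hp]
    ring
  simp_rw [hedge, prod_mul_distrib, ← Real.exp_sum, prod_add, bern]
  exact congrArg _ (sum_congr rfl fun F _ => by rw [prod_mul_distrib]; ring)

theorem pottsWq_eq_sum_bern [Fintype V] [DecidableEq V] (G : SimpleGraph V) [DecidableRel G.Adj]
    {q : ℕ} (hq : q ≠ 0) (β : ℝ) (J : Sym2 V → ℝ) (hh : V → Fin q → ℝ) (p : Sym2 V → ℝ)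
    (hp : ∀ e, p e = 1 - Real.exp (-(q * β) * J e)) (τ : V → Fin q) :
    pottsWq G q β J hh τ
      = Real.exp (∑ e ∈ G.edgeFinset, q * β * J e) *
        ∑ F ∈ G.edgeFinset.powerset,
          bern G p F * ((∏ e ∈ F, eDelta τ e) * Real.exp (β * ∑ i, hh i (τ i))) := by
  have hfield : ∑ r : Fin q, ∑ i, hh i r / q * (if τ i = r then 1 else 0)
      = (∑ i, hh i (τ i)) / q := by
    rw [sum_comm, sum_div]
    exact sum_congr rfl fun i _ => by simp
  have hexponent : -(q * β) * (-(∑ e ∈ G.edgeFinset, J e * eDelta τ e) - (∑ i, hh i (τ i)) / q)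
      = ∑ e ∈ G.edgeFinset, q * β * J e * eDelta τ e + β * ∑ i, hh i (τ i) := by
    simp_rw [mul_assoc, ← mul_sum]
    field_simp
    ring
  rw [pottsWq, hfield, hexponent, Real.exp_add, Real.exp_sum,
    prod_exp_mul_eDelta_eq_sum_bern G _ p (fun e => by rw [hp, neg_mul]), mul_assoc, sum_mul]
  simp_rw [mul_assoc]

theorem sum_filter_pottsWq_eq [Fintype V] [DecidableEq V] (G : SimpleGraph V)
    [DecidableRel G.Adj] {q : ℕ} (hq : 0 < q) (β : ℝ) (J : Sym2 V → ℝ) (hh : V → Fin q → ℝ)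
    (p : Sym2 V → ℝ) (hp : ∀ e, p e = 1 - Real.exp (-(q * β) * J e)) (x : V) (m : Fin q) :
    ∑ τ ∈ univ.filter (fun τ : V → Fin q => τ x = m), pottsWq G q β J hh τ
      = Real.exp (∑ e ∈ G.edgeFinset, q * β * J e) *
        ∑ F ∈ G.edgeFinset.powerset,
          Real.exp (β * ∑ i ∈ Kcomp G F x, hh i m) /
            (∑ r : Fin q, Real.exp (β * ∑ i ∈ Kcomp G F x, hh i r)) * grcW G q β p hh F := by
  simp_rw [pottsWq_eq_sum_bern G hq.ne' β J hh p hp]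
  rw [← mul_sum, sum_comm]
  refine congrArg _ (sum_congr rfl fun F hF => ?_)
  rw [← mul_sum, sum_filter_prod_eDelta_mul_exp_eq_div_mul (mem_powerset.mp hF) hq, grcW]
  ring

theorem sum_pottsWq_eq [Fintype V] [DecidableEq V] (G : SimpleGraph V)
    [DecidableRel G.Adj] {q : ℕ} (hq : 0 < q) (β : ℝ) (J : Sym2 V → ℝ) (hh : V → Fin q → ℝ)
    (p : Sym2 V → ℝ) (hp : ∀ e, p e = 1 - Real.exp (-(q * β) * J e)) (x : V) :
    ∑ τ : V → Fin q, pottsWq G q β J hh τ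
      = Real.exp (∑ e ∈ G.edgeFinset, q * β * J e) *
        ∑ F ∈ G.edgeFinset.powerset, grcW G q β p hh F := by
  have : Nonempty (Fin q) := ⟨⟨0, hq⟩⟩
  rw [← sum_fiberwise univ (fun τ : V → Fin q => τ x)]
  simp_rw [sum_filter_pottsWq_eq G hq β J hh p hp x, ← mul_sum]
  rw [sum_comm]
  refine congrArg _ (sum_congr rfl fun F _ => ?_)
  rw [← sum_mul, ← sum_div, div_self (Real.sum_exp_pos _).ne', one_mul]

open scoped Classical in
theorem statement13_general [Fintype V] [DecidableEq V]
    (G : SimpleGraph V) [DecidableRel G.Adj]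
    (q : ℕ) (hq : 1 ≤ q) (β : ℝ)
    (J : Sym2 V → ℝ)
    (hh : V → Fin q → ℝ)
    (p : Sym2 V → ℝ) (hp : ∀ e, p e = 1 - Real.exp (-(q * β) * J e))
    (x : V) (m : Fin q) :
    (∑ τ ∈ Finset.univ.filter (fun τ : V → Fin q => τ x = m),
          pottsWq G q β J hh τ) / (∑ τ : V → Fin q, pottsWq G q β J hh τ)
      = grcE G q β p hh
          (fun F => Real.exp (β * ∑ i ∈ Kcomp G F x, hh i m) /
            ∑ r : Fin q, Real.exp (β * ∑ i ∈ Kcomp G F x, hh i r)) := by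
  rw [sum_filter_pottsWq_eq G hq β J hh p hp x m, sum_pottsWq_eq G hq β J hh p hp x, grcE,
    mul_div_mul_left _ _ (Real.exp_pos _).ne']

open scoped Classical in
/-- Proposition (single-spin marginal of the general `q`-state Potts model). -/
theorem statement13 [Fintype V] [DecidableEq V]
    (G : SimpleGraph V) [DecidableRel G.Adj]
    (q : ℕ) (hq : 1 ≤ q) (β : ℝ) (hβ : 0 < β)
    (J : Sym2 V → ℝ) (hJ : ∀ e ∈ G.edgeFinset, 0 ≤ J e)
    (hh : V → Fin q → ℝ)
    (p : Sym2 V → ℝ) (hp : ∀ e, p e = 1 - Real.exp (-(q * β) * J e))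
    (x : V) (m : Fin q) :
    (∑ τ ∈ Finset.univ.filter (fun τ : V → Fin q => τ x = m),
          pottsWq G q β J hh τ) / (∑ τ : V → Fin q, pottsWq G q β J hh τ)
      = grcE G q β p hh
          (fun F => Real.exp (β * ∑ i ∈ Kcomp G F x, hh i m) /
            ∑ r : Fin q, Real.exp (β * ∑ i ∈ Kcomp G F x, hh i r)) :=
  statement13_general G q hq β J hh p hp x m
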